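/- arXiv:2501.00503 — 2 statements merged into one kernel-verified Lean document; each statement's English description precedes it below -/
import Mathlib

section
/- An ideal I on ℕ is equal to the intersection of a family of matrix summability ideals if and only if for every A ∉ I one has I↾A ≤_K I_d, where I_d is the ideal of asymptotic density zero sets. -/
open Filter

def IsIdeal (I : Set (Set ℕ)) : Prop :=
  (∀ A : Set ℕ, A.Finite → A ∈ I) ∧ Set.univ ∉ I ∧
    (∀ A B : Set ℕ, A ⊆ B → B ∈ I → A ∈ I) ∧
    ∀ A B : Set ℕ, A ∈ I → B ∈ I → A ∪ B ∈ I

def IsRegularMatrix (a : ℕ → ℕ → ℝ) : Prop :=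
  (∀ i k, 0 ≤ a i k) ∧ (∀ i, Summable (a i)) ∧ (∃ M : ℝ, ∀ i, ∑' k, a i k ≤ M) ∧
    Tendsto (fun i => ∑' k, a i k) atTop (nhds 1) ∧
    ∀ k, Tendsto (fun i => a i k) atTop (nhds 0)

def matrixIdeal (a : ℕ → ℕ → ℝ) : Set (Set ℕ) :=
  {B | Tendsto (fun i => ∑' k, B.indicator (a i) k) atTop (nhds 0)}

def densityZero : Set (Set ℕ) :=
  {A | Tendsto (fun n => ((A ∩ Set.Iio n).ncard : ℝ) / n) atTop (nhds 0)}

/-!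
If `I = ⋂ I(a)` and `A ∉ I`, some matrix in the family has `A ∉ I(a)`: infinitely many rows give
`A` mass at least `ε`, so each of them, cut down to a finite part of `A` and normalised, is a
probability distribution `μ j` on `A` with `μ j D → 0` for every `D ∈ I(a)`. Discretise `μ j` into
a finite word over `A` whose letter frequencies exceed those of `μ j` by at most `1 / (j + 1)`, and
let `f` read these words one after the other, each word coming late enough to be short compared with
everything read before it. A weighted Cesàro argument then shows that `f⁻¹ D` has density zero.

Conversely, the matrix whose `i`-th row is the empirical distribution of `f 0, …, f (i - 1)` has
summability ideal `{B | f⁻¹ B ∈ I_d}`. Intersecting over all `f` with `f⁻¹ C ∈ I_d` for `C ∈ I`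
gives `I`: a set `A ∉ I` is excluded by the `f : ℕ → A` given by the hypothesis, for which
`f⁻¹ A = ℕ`.
-/

open Finset Asymptotics
open scoped Classical

lemma ncard_preimage_inter_Iio {α : Type*} (f : ℕ → α) (B : Set α) (n : ℕ) :
    (f ⁻¹' B ∩ Set.Iio n).ncard = #{m ∈ range n | f m ∈ B} := by
  rw [← Set.ncard_coe_finset]
  congr 1
  ext m
  simp [and_comm]

lemma univ_notMem_densityZero : Set.univ ∉ densityZero := by
  intro h
  refine zero_ne_one (tendsto_nhds_unique h (tendsto_const_nhds.congr' ?_))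
  filter_upwards [eventually_ne_atTop 0] with n hn
  simp [hn]

lemma tendsto_nhds_zero_of_le_on_blocks {x g : ℕ → ℝ} {S : ℕ → ℕ} (hS : StrictMono S)
    (hx : ∀ n, 0 ≤ x n) (hg : Tendsto g atTop (nhds 0))
    (hxg : ∀ᶠ t in atTop, ∀ n, S t ≤ n → n < S (t + 1) → x n ≤ g t) :
    Tendsto x atTop (nhds 0) := by
  refine tendsto_order.2 ⟨fun η hη => .of_forall fun n => hη.trans_le (hx n), fun η hη => ?_⟩
  obtain ⟨T, hT⟩ := eventually_atTop.1 (hxg.and (hg.eventually (gt_mem_nhds hη)))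
  filter_upwards [eventually_ge_atTop (S T)] with n hn
  have hex : ∃ k, n < S k := ⟨n + 1, (Nat.lt_succ_self n).trans_le (hS.id_le _)⟩
  have hfind : T < Nat.find hex := by
    by_contra! h
    exact (Nat.find_spec hex).not_ge ((hS.monotone h).trans hn)
  obtain ⟨t, ht⟩ := Nat.exists_eq_add_of_lt hfind
  have hlo : S (T + t) ≤ n := not_lt.1 (Nat.find_min hex (by omega))
  have hhi : n < S (T + t + 1) := ht ▸ Nat.find_spec hex
  exact ((hT (T + t) (by omega)).1 n hlo hhi).trans_lt (hT (T + t) (by omega)).2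

lemma tsum_card_fiber_eq_card {α β : Type*} [DecidableEq β] (s : Finset α) (f : α → β) :
    ∑' k, (#{m ∈ s | f m = k} : ℝ) = #s := by
  rw [tsum_eq_sum (s := s.image f), card_eq_sum_card_image f s, Nat.cast_sum]
  intro k hk
  simp only [Nat.cast_eq_zero, card_eq_zero, filter_eq_empty_iff]
  exact fun m hm hmk => hk (mem_image.2 ⟨m, hm, hmk⟩)

noncomputable def empiricalMatrix (f : ℕ → ℕ) (i k : ℕ) : ℝ :=
  #{m ∈ range i | f m = k} / i

lemma tsum_indicator_empiricalMatrix (f : ℕ → ℕ) (B : Set ℕ) (i : ℕ) :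
    ∑' k, B.indicator (empiricalMatrix f i) k = (f ⁻¹' B ∩ Set.Iio i).ncard / i := by
  have hrow : ∀ k, B.indicator (empiricalMatrix f i) k =
      #{m ∈ {m ∈ range i | f m ∈ B} | f m = k} / i := by
    intro k
    by_cases hk : k ∈ B
    · rw [Set.indicator_of_mem hk, empiricalMatrix, filter_filter]
      congr 3
      exact filter_congr fun m _ => ⟨fun h => ⟨h ▸ hk, h⟩, And.right⟩
    · rw [Set.indicator_of_notMem hk, filter_filter, filter_false_of_mem]
      · simp
      · rintro m - ⟨hm, rfl⟩; exact hk hm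
  simp_rw [hrow, tsum_div_const, tsum_card_fiber_eq_card, ncard_preimage_inter_Iio]

lemma mem_matrixIdeal_empiricalMatrix_iff (f : ℕ → ℕ) (B : Set ℕ) :
    B ∈ matrixIdeal (empiricalMatrix f) ↔ f ⁻¹' B ∈ densityZero := by
  simp only [matrixIdeal, densityZero, Set.mem_ofPred_eq, tsum_indicator_empiricalMatrix]

lemma isRegularMatrix_empiricalMatrix (f : ℕ → ℕ) (hf : ∀ k, f ⁻¹' {k} ∈ densityZero) :
    IsRegularMatrix (empiricalMatrix f) := by
  have hrow : ∀ i, ∑' k, empiricalMatrix f i k = if i = 0 then 0 else 1 := fun i => by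
    have := tsum_indicator_empiricalMatrix f Set.univ i
    rw [Set.indicator_univ] at this
    rw [this]
    split_ifs with hi <;> simp [hi]
  refine ⟨fun i k => by unfold empiricalMatrix; positivity, fun i => ?_, ⟨1, fun i => ?_⟩, ?_,
    fun k => ?_⟩
  · refine summable_of_ne_finset_zero (s := (range i).image f) fun k hk => ?_
    rw [empiricalMatrix, filter_false_of_mem]
    · simp
    · rintro m hm rfl; exact hk (mem_image_of_mem f hm)
  · rw [hrow]; split_ifs <;> norm_num
  · refine tendsto_const_nhds.congr' ?_
    filter_upwards [eventually_ne_atTop 0] with i hi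
    simp [hrow, hi]
  · have := (mem_matrixIdeal_empiricalMatrix_iff f {k}).2 (hf k)
    simpa [matrixIdeal, Set.indicator_singleton] using this

theorem exists_eq_iInter_matrixIdeal_of_katetov {I : Set (Set ℕ)}
    (hsingleton : ∀ k, ({k} : Set ℕ) ∈ I)
    (H : ∀ A : Set ℕ, A ∉ I → ∃ f : ℕ → ℕ, Set.range f ⊆ A ∧
      ∀ C ∈ I, f ⁻¹' (C ∩ A) ∈ densityZero) :
    ∃ 𝓜 : Set (ℕ → ℕ → ℝ), (∀ a ∈ 𝓜, IsRegularMatrix a) ∧ I = ⋂ a ∈ 𝓜, matrixIdeal a := by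
  refine ⟨empiricalMatrix '' {f | ∀ C ∈ I, f ⁻¹' C ∈ densityZero}, ?_, ?_⟩
  · rintro _ ⟨f, hf, rfl⟩
    exact isRegularMatrix_empiricalMatrix f fun k => hf _ (hsingleton k)
  ext B
  simp only [Set.mem_iInter, Set.mem_image, Set.mem_ofPred_eq]
  constructor
  · rintro hB _ ⟨f, hf, rfl⟩
    exact (mem_matrixIdeal_empiricalMatrix_iff f B).2 (hf B hB)
  · intro h
    by_contra hB
    obtain ⟨f, hfB, hf⟩ := H B hB
    have hpre : ∀ C, f ⁻¹' (C ∩ B) = f ⁻¹' C := fun C => by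
      rw [Set.preimage_inter, Set.preimage_eq_univ_iff.2 hfB, Set.inter_univ]
    have := (mem_matrixIdeal_empiricalMatrix_iff f B).1
      (h _ ⟨f, fun C hC => hpre C ▸ hf C hC, rfl⟩)
    rw [Set.preimage_eq_univ_iff.2 hfB] at this
    exact univ_notMem_densityZero this

section Lists

variable {α : Type*}

lemma card_filter_range_getD (l : List α) (p : α → Prop) [DecidablePred p] (d : α) :
    #{i ∈ range l.length | p (l.getD i d)} = l.countP (p ·) := by
  induction l with
  | nil => simp
  | cons x l ih =>
    rw [List.length_cons, card_filter, sum_range_succ']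
    simp only [List.getD_cons_succ, List.getD_cons_zero]
    rw [← card_filter, ih, List.countP_cons]
    simp

lemma flatMap_range_prefix (Q : ℕ → List α) {t t' : ℕ} (h : t ≤ t') :
    (List.range t).flatMap Q <+: (List.range t').flatMap Q := by
  obtain ⟨k, rfl⟩ := Nat.exists_eq_add_of_le h
  rw [List.range_add, List.flatMap_append]
  exact List.prefix_append _ _

lemma length_flatMap_range (Q : ℕ → List α) (t : ℕ) :
    ((List.range t).flatMap Q).length = ∑ u ∈ range t, (Q u).length := by
  rw [List.length_flatMap, sum_eq_multiset_sum]
  rfl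

lemma le_length_flatMap_range {Q : ℕ → List α} (hQ : ∀ t, Q t ≠ []) (t : ℕ) :
    t ≤ ((List.range t).flatMap Q).length := by
  rw [length_flatMap_range]
  calc t = ∑ _u ∈ range t, 1 := by simp
    _ ≤ _ := sum_le_sum fun u _ => List.length_pos_iff.2 (hQ u)

end Lists

/-- The sequence `Q 0 ++ Q 1 ++ ⋯`; the value `default` is never read when all `Q t` are
nonempty. -/
def concatSeq {α : Type*} [Inhabited α] (Q : ℕ → List α) (x : ℕ) : α :=
  ((List.range (x + 1)).flatMap Q).getD x default

section concatSeq

variable {α : Type*} [Inhabited α] {Q : ℕ → List α}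

lemma concatSeq_eq_getD (hQ : ∀ t, Q t ≠ []) {t x : ℕ}
    (hx : x < ((List.range t).flatMap Q).length) :
    concatSeq Q x = ((List.range t).flatMap Q).getD x default := by
  have hx' : x < ((List.range (x + 1)).flatMap Q).length := le_length_flatMap_range hQ (x + 1)
  simp only [concatSeq, List.getD_eq_getElem _ _ hx, List.getD_eq_getElem _ _ hx']
  rcases le_total (x + 1) t with h | h
  · exact (flatMap_range_prefix Q h).getElem hx'
  · exact ((flatMap_range_prefix Q h).getElem hx).symm

lemma exists_concatSeq_mem (hQ : ∀ t, Q t ≠ []) (x : ℕ) : ∃ t, concatSeq Q x ∈ Q t := by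
  have hx : x < ((List.range (x + 1)).flatMap Q).length := le_length_flatMap_range hQ (x + 1)
  have := List.getElem_mem hx
  rw [← List.getD_eq_getElem _ default hx, List.mem_flatMap] at this
  obtain ⟨t, -, ht⟩ := this
  exact ⟨t, ht⟩

lemma card_filter_concatSeq (hQ : ∀ t, Q t ≠ []) (D : Set α) (t : ℕ) :
    #{x ∈ range (∑ u ∈ range t, (Q u).length) | concatSeq Q x ∈ D} =
      ∑ u ∈ range t, (Q u).countP (· ∈ D) := by
  rw [← length_flatMap_range, filter_congr fun x hx => by
    rw [concatSeq_eq_getD hQ (mem_range.1 hx)], card_filter_range_getD _ (· ∈ D),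
    List.countP_flatMap, sum_eq_multiset_sum]
  rfl

lemma preimage_concatSeq_mem_densityZero (hQ : ∀ t, Q t ≠ [])
    (hlen : ∀ᶠ t in atTop, (Q t).length ≤ t) {D : Set α} {δ : ℕ → ℝ}
    (hδ : Tendsto δ atTop (nhds 0))
    (hcount : ∀ t, ((Q t).countP (· ∈ D) : ℝ) ≤ (Q t).length * δ t) :
    concatSeq Q ⁻¹' D ∈ densityZero := by
  set S : ℕ → ℕ := fun t => ∑ u ∈ range t, (Q u).length
  set C : ℕ → ℕ := fun t => ∑ u ∈ range t, (Q u).countP (· ∈ D)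
  have hS : StrictMono S := strictMono_nat_of_lt_succ fun t => by
    simp [S, sum_range_succ, List.length_pos_iff.2 (hQ t)]
  have hCS : (fun t => (C t : ℝ)) =o[atTop] fun t => (S t : ℝ) := by
    simp only [C, S, Nat.cast_sum]
    refine IsLittleO.sum_range ?_ (fun t => by positivity) ?_
    · refine isLittleO_iff.2 fun η hη => ?_
      filter_upwards [hδ.eventually (ge_mem_nhds hη)] with t ht
      simp only [Real.norm_natCast]
      exact (hcount t).trans (by rw [mul_comm]; gcongr)
    · simpa [S, Function.comp_def] using
        (tendsto_natCast_atTop_atTop (R := ℝ)).comp hS.tendsto_atTop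
  -- blocks are short: `|Q t| ≤ t ≤ S t`
  have hSS : (fun t => (S (t + 1) : ℝ)) =O[atTop] fun t => (S t : ℝ) := by
    refine IsBigO.of_bound 2 ?_
    filter_upwards [hlen] with t ht
    have : t ≤ S t := hS.id_le t
    simp only [Real.norm_natCast, S, sum_range_succ] at this ⊢
    norm_cast
    omega
  have hg : Tendsto (fun t => (C (t + 1) : ℝ) / S t) atTop (nhds 0) :=
    ((hCS.comp_tendsto (tendsto_add_atTop_nat 1)).trans_isBigO hSS).tendsto_div_nhds_zero
  refine tendsto_nhds_zero_of_le_on_blocks hS (fun n => by positivity) hg ?_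
  filter_upwards [eventually_ge_atTop 1] with t ht n hlo hhi
  have hcnt : #{x ∈ range n | concatSeq Q x ∈ D} ≤ C (t + 1) :=
    calc _ ≤ #{x ∈ range (S (t + 1)) | concatSeq Q x ∈ D} :=
          card_le_card (filter_subset_filter _ (range_subset_range.2 hhi.le))
      _ = C (t + 1) := card_filter_concatSeq hQ D (t + 1)
  rw [ncard_preimage_inter_Iio]
  have hSt : 0 < S t := (hS.id_le t).trans_lt' ht
  gcongr

end concatSeq

lemma exists_tendsto_atTop_eventually_le (L : ℕ → ℕ) :
    ∃ b : ℕ → ℕ, Tendsto b atTop atTop ∧ ∀ᶠ t in atTop, L (b t) ≤ t := by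
  let P : ℕ → ℕ → Prop := fun t j => ∀ i ≤ j, L i ≤ t
  refine ⟨fun t => Nat.findGreatest (P t) t, tendsto_atTop.2 fun J => ?_, ?_⟩
  · filter_upwards [eventually_ge_atTop (J + ∑ i ∈ range (J + 1), L i)] with t ht
    refine Nat.le_findGreatest (by omega) fun i hi => le_trans ?_ (le_of_add_le_right ht)
    exact single_le_sum (fun _ _ => Nat.zero_le _) (mem_range.2 (Nat.lt_succ_of_le hi))
  · filter_upwards [eventually_ge_atTop (L 0)] with t ht
    have h0 : P t 0 := fun i hi => by rwa [Nat.le_zero.1 hi]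
    exact Nat.findGreatest_spec (P := P t) (Nat.zero_le t) h0 _ le_rfl

lemma exists_list_countP_le {α : Type*} (F : Finset α) (ν : α → ℝ) (hν : ∀ k, 0 ≤ ν k)
    (hT : 0 < ∑ k ∈ F, ν k) {η : ℝ} (hη : 0 < η) :
    ∃ l : List α, l ≠ [] ∧ (∀ x ∈ l, 0 < ν x) ∧ ∀ D : Set α,
      (l.countP (· ∈ D) : ℝ) ≤ l.length * ((∑ k ∈ F with k ∈ D, ν k) / ∑ k ∈ F, ν k + η) := by
  set T := ∑ k ∈ F, ν k
  set N : ℕ := ⌈#F / η⌉₊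
  set w : α → ℕ := fun k => ⌈N * ν k / T⌉₊
  set l := F.toList.flatMap fun k => List.replicate (w k) k
  have hlen : (l.length : ℝ) = ∑ k ∈ F, (w k : ℝ) := by
    simp [l, List.length_flatMap, sum_map_toList]
  have hcount : ∀ D : Set α, (l.countP (· ∈ D) : ℝ) = ∑ k ∈ F with k ∈ D, (w k : ℝ) := by
    intro D
    simp [l, List.countP_flatMap, Function.comp_def, sum_map_toList, List.countP_replicate,
      sum_filter]
  have hFne : F.Nonempty := nonempty_of_sum_ne_zero hT.ne'
  have hN : (#F : ℝ) ≤ η * N := by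
    rw [← div_le_iff₀' hη]; exact Nat.le_ceil _
  have hNlen : (N : ℝ) ≤ l.length := by
    rw [hlen]
    calc (N : ℝ) = ∑ k ∈ F, N * ν k / T := by
          rw [← sum_div, ← mul_sum, mul_div_cancel_right₀ _ hT.ne']
      _ ≤ _ := sum_le_sum fun k _ => Nat.le_ceil _
  have hNpos : (0 : ℝ) < N := by
    have : (0 : ℝ) < #F := by exact_mod_cast hFne.card_pos
    nlinarith
  refine ⟨l, ?_, ?_, fun D => ?_⟩
  · rw [← List.length_pos_iff]; exact_mod_cast hNpos.trans_le hNlen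
  · intro x hx
    obtain ⟨k, -, hk⟩ := List.mem_flatMap.1 hx
    obtain ⟨hw, rfl⟩ := List.mem_replicate.1 hk
    refine (hν x).lt_of_ne fun h => hw ?_
    simp [w, ← h]
  · have hwD : ∑ k ∈ F with k ∈ D, (w k : ℝ) ≤ N * (∑ k ∈ F with k ∈ D, ν k) / T + #F :=
      calc _ ≤ ∑ k ∈ F with k ∈ D, (N * ν k / T + 1) :=
            sum_le_sum fun k _ =>
              (Nat.ceil_lt_add_one (div_nonneg (mul_nonneg N.cast_nonneg (hν k)) hT.le)).le
        _ ≤ _ := by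
          rw [sum_add_distrib, ← sum_div, ← mul_sum, sum_const, nsmul_one]
          gcongr
          exact filter_subset _ _
    have hratio : 0 ≤ (∑ k ∈ F with k ∈ D, ν k) / T :=
      div_nonneg (sum_nonneg fun k _ => hν k) hT.le
    rw [hcount]
    calc _ ≤ N * ((∑ k ∈ F with k ∈ D, ν k) / T) + η * N := by rw [mul_div_assoc] at hwD; linarith
      _ = N * ((∑ k ∈ F with k ∈ D, ν k) / T + η) := by ring
      _ ≤ _ := by gcongr

lemma exists_rows_of_notMem_matrixIdeal {a : ℕ → ℕ → ℝ} (hnn : ∀ i k, 0 ≤ a i k) {A : Set ℕ}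
    (hA : A ∉ matrixIdeal a) :
    ∃ ε > 0, ∃ r : ℕ → ℕ, Tendsto r atTop atTop ∧
      ∀ j, ∃ F : Finset ℕ, ε ≤ ∑ k ∈ F, A.indicator (a (r j)) k := by
  have hnn' : ∀ i k, 0 ≤ A.indicator (a i) k := fun i k =>
    Set.indicator_nonneg (fun k _ => hnn i k) k
  have hfreq : ∃ ε > 0, ∃ᶠ i in atTop, ε ≤ ∑' k, A.indicator (a i) k := by
    by_contra! h
    refine hA (tendsto_order.2
      ⟨fun η hη => .of_forall fun i => hη.trans_le (tsum_nonneg (hnn' i)), fun η hη => ?_⟩)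
    simpa using h η hη
  obtain ⟨ε, hε, hfreq⟩ := hfreq
  obtain ⟨r, hr, hrε⟩ := extraction_of_frequently_atTop hfreq
  refine ⟨ε / 2, by positivity, r, hr.tendsto_atTop, fun j => ?_⟩
  by_contra! h
  have := Real.tsum_le_of_sum_le (hnn' (r j)) fun F => (h F).le
  linarith [hrε j]

lemma sum_filter_indicator_le_tsum {a : ℕ → ℝ} (hnn : ∀ k, 0 ≤ a k) (ha : Summable a)
    (A D : Set ℕ) (F : Finset ℕ) :
    ∑ k ∈ F with k ∈ D, A.indicator a k ≤ ∑' k, D.indicator a k :=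
  calc _ ≤ ∑ k ∈ F with k ∈ D, D.indicator a k :=
        sum_le_sum fun k hk => by
          rw [Set.indicator_of_mem (mem_filter.1 hk).2]
          exact Set.indicator_le_self' (fun k _ => hnn k) k
    _ ≤ _ := (ha.indicator D).sum_le_tsum _ fun k _ => Set.indicator_nonneg (fun k _ => hnn k) k

theorem exists_densityZero_katetov_of_notMem_matrixIdeal {a : ℕ → ℕ → ℝ}
    (hnn : ∀ i k, 0 ≤ a i k) (hsum : ∀ i, Summable (a i)) {A : Set ℕ} (hA : A ∉ matrixIdeal a) :
    ∃ f : ℕ → ℕ, Set.range f ⊆ A ∧ ∀ D ∈ matrixIdeal a, f ⁻¹' D ∈ densityZero := by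
  obtain ⟨ε, hε, r, hr, hF⟩ := exists_rows_of_notMem_matrixIdeal hnn hA
  choose F hF using hF
  have hν : ∀ j k, 0 ≤ A.indicator (a (r j)) k := fun j k =>
    Set.indicator_nonneg (fun k _ => hnn _ k) k
  choose P hPne hPpos hPcount using fun j =>
    exists_list_countP_le (F j) _ (hν j) (hε.trans_le (hF j)) (Nat.one_div_pos_of_nat (n := j))
  obtain ⟨b, hb, hbP⟩ := exists_tendsto_atTop_eventually_le fun j => (P j).length
  refine ⟨concatSeq (P ∘ b), ?_, fun D hD => ?_⟩
  · rintro _ ⟨x, rfl⟩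
    obtain ⟨t, ht⟩ := exists_concatSeq_mem (fun t => hPne (b t)) x
    exact Set.mem_of_indicator_ne_zero (hPpos _ _ ht).ne'
  refine preimage_concatSeq_mem_densityZero (fun t => hPne (b t)) hbP
    (δ := fun t => (∑' k, D.indicator (a (r (b t))) k) / ε + 1 / ((b t : ℝ) + 1)) ?_ fun t => ?_
  · simpa using ((hD.comp (hr.comp hb)).div_const ε).add
      (tendsto_one_div_add_atTop_nhds_zero_nat.comp hb)
  · refine (hPcount (b t) D).trans ?_
    gcongr _ * (?_ + _)
    exact div_le_div₀ (tsum_nonneg fun k => Set.indicator_nonneg (fun k _ => hnn _ k) k)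
      (sum_filter_indicator_le_tsum (hnn _) (hsum _) A D _) hε (hF (b t))

/-- An ideal `I` on `ℕ` is the intersection of a family of matrix summability ideals iff
`I ↾ A ≤_K I_d` for every `A ∉ I` (expressed via a function `f : ℕ → A`). -/
theorem stmt12 (I : Set (Set ℕ)) (hI : IsIdeal I) :
    (∃ 𝓜 : Set (ℕ → ℕ → ℝ), (∀ a ∈ 𝓜, IsRegularMatrix a) ∧
      I = ⋂ a ∈ 𝓜, matrixIdeal a) ↔
    ∀ A : Set ℕ, A ∉ I → ∃ f : ℕ → ℕ, Set.range f ⊆ A ∧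
      ∀ C ∈ I, f ⁻¹' (C ∩ A) ∈ densityZero := by
  constructor
  · rintro ⟨𝓜, h𝓜, rfl⟩ A hA
    obtain ⟨a, ha, hAa⟩ : ∃ a ∈ 𝓜, A ∉ matrixIdeal a := by simpa using hA
    obtain ⟨f, hfA, hf⟩ :=
      exists_densityZero_katetov_of_notMem_matrixIdeal (h𝓜 a ha).1 (h𝓜 a ha).2.1 hAa
    have hCA : ∀ C ∈ ⋂ a ∈ 𝓜, matrixIdeal a, C ∩ A ∈ matrixIdeal a := fun C hC =>
      Set.mem_iInter₂.1 (hI.2.2.1 _ _ Set.inter_subset_left hC) a ha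
    exact ⟨f, hfA, fun C hC => hf _ (hCA C hC)⟩
  · exact exists_eq_iInter_matrixIdeal_of_katetov fun k => hI.1 _ (Set.finite_singleton k)
end

section
/- Let I be an ideal on ℕ. The following are equivalent: (1) I is an intersection of summable ideals; (2) for every A ∉ I there exists f : ℕ → [0,∞) with ∑_n f(n) = ∞ such that I↾A ≤_K I_f. -/
/-- The summable ideal generated by `f : ℕ → [0,∞)`. -/
def summableIdeal (f : ℕ → ℝ) : Set (Set ℕ) :=
  {A | Summable (A.indicator f)}

open Set

section FiberSum

variable {α β : Type*}

noncomputable def fiberSum (h : α → β) (f : α → ℝ) (b : β) : ℝ :=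
  ∑' a : h ⁻¹' {b}, f a

variable {h : α → β} {f : α → ℝ}

lemma fiberSum_nonneg (hf : ∀ a, 0 ≤ f a) (b : β) : 0 ≤ fiberSum h f b :=
  tsum_nonneg fun a => hf a

lemma indicator_fiberSum (C : Set β) :
    C.indicator (fiberSum h f) = fiberSum h ((h ⁻¹' C).indicator f) := by
  funext b
  have hfib (a : h ⁻¹' {b}) : h a = b := a.2
  by_cases hb : b ∈ C
  · rw [indicator_of_mem hb]
    exact tsum_congr fun a => (indicator_of_mem (by rwa [mem_preimage, hfib a]) f).symm
  · rw [indicator_of_notMem hb, fiberSum, eq_comm]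
    exact (tsum_congr fun a => indicator_of_notMem (by rwa [mem_preimage, hfib a]) f).trans
      tsum_zero

lemma Summable.fiberSum (hf : Summable f) : Summable (fiberSum h f) :=
  (hf.hasSum.tsum_fiberwise h).summable

lemma summable_of_summable_fiberSum (hf : ∀ a, 0 ≤ f a)
    (hfib : ∀ b, Summable ((h ⁻¹' {b}).indicator f)) (hs : Summable (fiberSum h f)) :
    Summable f := by
  rw [← (Equiv.sigmaFiberEquiv h).summable_iff]
  exact (summable_sigma_of_nonneg fun _ => hf _).2
    ⟨fun b => summable_subtype_iff_indicator.2 (hfib b), hs⟩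

end FiberSum

lemma exists_katetov_le_summableIdeal_of_notMem {g : ℕ → ℝ} (hg : ∀ n, 0 ≤ g n) {A : Set ℕ}
    (hA : A ∉ summableIdeal g) :
    ∃ f : ℕ → ℝ, (∀ n, 0 ≤ f n) ∧ ¬ Summable f ∧
      ∃ h : ℕ → ℕ, range h ⊆ A ∧ ∀ C ∈ summableIdeal g, h ⁻¹' (C ∩ A) ∈ summableIdeal f := by
  classical
  obtain ⟨a₀, ha₀⟩ : A.Nonempty := by
    refine nonempty_iff_ne_empty.2 fun hA₀ => hA ?_
    simp only [summableIdeal, mem_ofPred_eq, hA₀, indicator_empty, summable_zero]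
  set r : ℕ → ℕ := fun n => if n ∈ A then n else a₀
  have hr : range r ⊆ A := by
    rintro _ ⟨n, rfl⟩
    by_cases hn : n ∈ A <;> simp [r, hn, ha₀]
  have hpre (C : Set ℕ) : r ⁻¹' (C ∩ A) ∩ A = C ∩ A := by
    ext n
    by_cases hn : n ∈ A <;> simp [r, hn]
  refine ⟨A.indicator g, indicator_nonneg fun n _ => hg n, hA, r, hr, fun C hC => ?_⟩
  change Summable _
  rw [indicator_indicator, hpre, inter_comm, ← indicator_indicator]
  exact hC.indicator A

lemma exists_summableIdeal_superset_notMem {I : Set (Set ℕ)} (hI : ∀ n, {n} ∈ I) {A : Set ℕ}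
    {f : ℕ → ℝ} (hf : ∀ n, 0 ≤ f n) (hf' : ¬ Summable f) {h : ℕ → ℕ} (hh : range h ⊆ A)
    (hIf : ∀ C ∈ I, h ⁻¹' (C ∩ A) ∈ summableIdeal f) :
    ∃ g : ℕ → ℝ, (∀ n, 0 ≤ g n) ∧ ¬ Summable g ∧ I ⊆ summableIdeal g ∧ A ∉ summableIdeal g := by
  have hpre (C : Set ℕ) : h ⁻¹' (C ∩ A) = h ⁻¹' C := by
    rw [preimage_inter, preimage_eq_univ_iff.2 hh, inter_univ]
  have hgA : A.indicator (fiberSum h f) = fiberSum h f := by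
    rw [indicator_fiberSum, preimage_eq_univ_iff.2 hh, indicator_univ]
  have hg' : ¬ Summable (fiberSum h f) := fun hs =>
    hf' <| summable_of_summable_fiberSum hf (fun n => hpre {n} ▸ hIf {n} (hI n)) hs
  refine ⟨fiberSum h f, fiberSum_nonneg hf, hg', fun C hC => ?_, fun hA => hg' ?_⟩
  · change Summable _
    rw [indicator_fiberSum, ← hpre]
    exact Summable.fiberSum (hIf C hC)
  · rwa [summableIdeal, mem_ofPred_eq, hgA] at hA

/-- An ideal `I` on `ℕ` is an intersection of summable ideals iff for every `A ∉ I` there is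
a summable ideal `I_f` with `I ↾ A ≤_K I_f` (witnessed by `h : ℕ → A`). -/
theorem stmt16 (I : Set (Set ℕ)) (hI : IsIdeal I) :
    (∃ G : Set (ℕ → ℝ), (∀ g ∈ G, (∀ n, 0 ≤ g n) ∧ ¬ Summable g) ∧
      I = ⋂ g ∈ G, summableIdeal g) ↔
    ∀ A : Set ℕ, A ∉ I → ∃ f : ℕ → ℝ, (∀ n, 0 ≤ f n) ∧ ¬ Summable f ∧
      ∃ h : ℕ → ℕ, Set.range h ⊆ A ∧ ∀ C ∈ I, h ⁻¹' (C ∩ A) ∈ summableIdeal f := by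
  constructor
  · rintro ⟨G, hG, rfl⟩ A hA
    obtain ⟨g, hgG, hAg⟩ : ∃ g ∈ G, A ∉ summableIdeal g := by simpa using hA
    obtain ⟨f, hf, hf', h, hh, hgf⟩ := exists_katetov_le_summableIdeal_of_notMem (hG g hgG).1 hAg
    exact ⟨f, hf, hf', h, hh, fun C hC => hgf C (mem_iInter₂.1 hC g hgG)⟩
  · intro H
    refine ⟨{g | (∀ n, 0 ≤ g n) ∧ ¬ Summable g ∧ I ⊆ summableIdeal g},
      fun g hg => ⟨hg.1, hg.2.1⟩, subset_antisymm (fun C hC => mem_iInter₂.2 fun g hg => hg.2.2 hC)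
      fun A hA => ?_⟩
    by_contra hAI
    obtain ⟨f, hf, hf', h, hh, hIf⟩ := H A hAI
    obtain ⟨g, hg, hg', hIg, hAg⟩ :=
      exists_summableIdeal_superset_notMem (fun n => hI.1 {n} (finite_singleton n)) hf hf' hh hIf
    exact hAg (mem_iInter₂.1 hA g ⟨hg, hg', hIg⟩)
end
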